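/- (Sub-claim in the proof of Theorem B.2 of the paper.) Let {i, m} ⊆ V be a connected pair, let j ∈ V ∖ {i, m} with (j, i) ∈ A, and let x ∈ ℕ. If i is NOT cycle-partitioning at order x with respect to {j} and {m}, then there exists U ⊆ V with {i, j, m} ⊆ U and |U| ≤ x + 2 such that D[U] is a directed sub-block. -/

import Mathlib

open Set

variable {V : Type*}

/-- One arc step within the induced subgraph on the vertex set `S`. -/
def StepIn (A : V → V → Prop) (S : Set V) (u v : V) : Prop :=
  u ∈ S ∧ v ∈ S ∧ A u v

/-- `v` is reachable from `u` by a directed path in the induced subgraph on `S`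
(every vertex is reachable from itself, provided it lies in `S`). -/
def ReachIn (A : V → V → Prop) (S : Set V) (u v : V) : Prop :=
  u ∈ S ∧ Relation.ReflTransGen (StepIn A S) u v

/-- `IN(X)`: the set of vertices from which some member of `X` is reachable,
computed in the induced subgraph on `S`. -/
def InSet (A : V → V → Prop) (S : Set V) (X : Set V) : Set V :=
  {u | ∃ x ∈ X, ReachIn A S u x}

/-- `Z` is dynamically partitioning with respect to `X` and `Y`:
`IN(X) ∩ IN(Y) = ∅` computed in the induced subgraph `D − Z`. -/
def DynPart (A : V → V → Prop) (X Y Z : Set V) : Prop :=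
  InSet A Zᶜ X ∩ InSet A Zᶜ Y = ∅

/-- `StepsLe r n u v`: `v` can be reached from `u` in at most `n` `r`-steps. -/
def StepsLe (r : V → V → Prop) : ℕ → V → V → Prop
  | 0, u, v => u = v
  | n + 1, u, v => u = v ∨ ∃ w, r u w ∧ StepsLe r n w v

/-- `v` is reachable from `u` by a directed path using at most `n` arcs
in the induced subgraph on `S`. -/
def ReachInLe (A : V → V → Prop) (S : Set V) (n : ℕ) (u v : V) : Prop :=
  u ∈ S ∧ StepsLe (StepIn A S) n u v

/-- `IN_a(X)` computed in the induced subgraph on `S`. -/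
def InSetLe (A : V → V → Prop) (S : Set V) (a : ℕ) (X : Set V) : Set V :=
  {u | ∃ x ∈ X, ReachInLe A S a u x}

/-- The vertex `i` is cycle-partitioning at order `x` with respect to `X` and `Y`:
`IN_a(X) ∩ IN_b(Y) = ∅` in `D − {i}` for all `a + b = x`. -/
def CyclePart (A : V → V → Prop) (X Y : Set V) (i : V) (x : ℕ) : Prop :=
  ∀ a b : ℕ, a + b = x → InSetLe A {i}ᶜ a X ∩ InSetLe A {i}ᶜ b Y = ∅

/-- One adjacency step of the underlying (simple) graph of `D[W]`. -/
def UStep (A : V → V → Prop) (W : Set V) (u v : V) : Prop :=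
  u ∈ W ∧ v ∈ W ∧ u ≠ v ∧ (A u v ∨ A v u)

/-- The underlying graph of `D[W]` is connected. -/
def UConnected (A : V → V → Prop) (W : Set V) : Prop :=
  W.Nonempty ∧ ∀ u ∈ W, ∀ v ∈ W, Relation.ReflTransGen (UStep A W) u v

/-- The underlying graph of `D[W]` is biconnected: at least 3 vertices, connected,
and deleting any single vertex leaves a connected graph. -/
def Biconnected (A : V → V → Prop) (W : Set V) : Prop :=
  3 ≤ W.ncard ∧ UConnected A W ∧ ∀ v ∈ W, UConnected A (W \ {v})

/-- `D[W]` is a directed sub-block: some vertex of `W` is reachable in `D[W]` from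
every other vertex of `W`, and the underlying graph of `D[W]` is biconnected. -/
def DirectedSubBlock (A : V → V → Prop) (W : Set V) : Prop :=
  (∃ i ∈ W, ∀ j ∈ W, ReachIn A W j i) ∧ Biconnected A W

/-- A directed sub-block is a transmission block iff it is maximal. -/
def TransmissionBlock (A : V → V → Prop) (W : Set V) : Prop :=
  DirectedSubBlock A W ∧ ∀ U : Set V, W ⊂ U → ¬ DirectedSubBlock A U

/-- A connected pair: a two-element set `{i, j}` with an arc between `i` and `j`. -/
def ConnectedPair (A : V → V → Prop) (W : Set V) : Prop :=
  ∃ i j : V, i ≠ j ∧ W = {i, j} ∧ (A i j ∨ A j i)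

/-- `W'` is obtained from `W` by one exact generation step. -/
def ExactStep (A : V → V → Prop) (W W' : Set V) : Prop :=
  ∃ k, k ∉ W ∧ W' = W ∪ {k} ∧ ∃ j ∈ W, A k j ∧ ¬ DynPart A {k} (W \ {j}) {j}

/-- `W` is the last term of a finite chain of exact generation steps whose
first term is a connected pair. -/
def GeneratedFromPair (A : V → V → Prop) (W : Set V) : Prop :=
  ∃ P : Set V, ConnectedPair A P ∧ Relation.ReflTransGen (ExactStep A) P W

/-- `W'` is obtained from `W` by one order-`x` cycle generation step. -/
def CycleStep (A : V → V → Prop) (x : ℕ) (W W' : Set V) : Prop :=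
  ∃ k, k ∉ W ∧ W' = W ∪ {k} ∧ ∃ j ∈ W, A k j ∧ ¬ CyclePart A {k} (W \ {j}) j x

/-- `W` is the last term of a finite chain of order-`x` cycle generation steps
whose first term is a connected pair. -/
def XGenerable (A : V → V → Prop) (x : ℕ) (W : Set V) : Prop :=
  ∃ P : Set V, ConnectedPair A P ∧ Relation.ReflTransGen (CycleStep A x) P W

/-!
If `i` is not cycle-partitioning, some vertex `u ≠ i` reaches `j` and `m` in `D − {i}` by walks
with `a` and `b` arcs, `a + b = x`. Shortening them to paths that meet only at `u` and closing them
up with the arcs `j → i` and `i — m` yields a cycle of the underlying graph through `i`, `j`, `m`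
on at most `x + 2` vertices. The vertex set of a cycle is biconnected, and each of its vertices
reaches `i` or `m` along one of the two paths, hence all of them reach the head of the arc between
`i` and `m`.
-/

open Relation

theorem List.IsChain.and {α : Type*} {R S : α → α → Prop} {l : List α} (hR : l.IsChain R)
    (hS : l.IsChain S) : l.IsChain fun a b => R a b ∧ S a b := by
  induction hR with
  | nil => exact .nil
  | singleton a => exact .singleton a
  | cons_cons hab _ ih =>
    obtain ⟨hab', hS⟩ := List.isChain_cons_cons.mp hS
    exact .cons_cons ⟨hab, hab'⟩ (ih hS)

theorem List.IsChain.reflTransGen_of_mem {α : Type*} {R : α → α → Prop} [Std.Symm R]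
    {l : List α} {a b : α} (hl : l.IsChain R) (ha : a ∈ l) (hb : b ∈ l) :
    ReflTransGen R a b := by
  have hne : l ≠ [] := List.ne_nil_of_mem ha
  have hhead : ∀ c ∈ l, ReflTransGen R (l.head hne) c :=
    hl.induction _ _ (fun _ _ hxy hx => hx.tail hxy) fun _ => .refl
  exact (Std.Symm.symm _ _ (hhead a ha)).trans (hhead b hb)

theorem Cycle.Chain.isChain {α : Type*} {R : α → α → Prop} {l : List α}
    (h : Cycle.Chain R (l : Cycle α)) : l.IsChain R := by
  cases l with
  | nil => exact .nil
  | cons a t =>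
    rw [Cycle.chain_coe_cons, ← List.cons_append] at h
    exact h.left_of_append

theorem List.ncard_setOf_mem_le_length {α : Type*} (l : List α) :
    {a | a ∈ l}.ncard ≤ l.length := by
  classical
  rw [← List.coe_toFinset, Set.ncard_coe_finset]
  exact l.toFinset_card_le

theorem List.ncard_setOf_mem_of_nodup {α : Type*} {l : List α} (hl : l.Nodup) :
    {a | a ∈ l}.ncard = l.length := by
  classical
  rw [← List.coe_toFinset, Set.ncard_coe_finset, List.toFinset_card_of_nodup hl]

section Walks

variable {r r' : V → V → Prop} {u v w : V} {l : List V}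

inductive IsWalk (r : V → V → Prop) : V → V → List V → Prop
  | single (u : V) : IsWalk r u u [u]
  | cons {u v w : V} {l : List V} : r u v → IsWalk r v w l → IsWalk r u w (u :: l)

namespace IsWalk

theorem exists_eq_cons (h : IsWalk r u v l) : ∃ t, l = u :: t := by
  cases h <;> exact ⟨_, rfl⟩

theorem head_mem (h : IsWalk r u v l) : u ∈ l := by
  obtain ⟨t, rfl⟩ := h.exists_eq_cons
  exact List.mem_cons_self

theorem last_mem (h : IsWalk r u v l) : v ∈ l := by
  induction h with
  | single => exact List.mem_singleton_self _
  | cons _ _ ih => exact List.mem_cons_of_mem _ ih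

theorem isChain (h : IsWalk r u v l) : l.IsChain r := by
  induction h with
  | single => exact .singleton _
  | cons huv hw ih =>
    obtain ⟨t, rfl⟩ := hw.exists_eq_cons
    exact .cons_cons huv ih

theorem snoc (h : IsWalk r u v l) (hvw : r v w) : IsWalk r u w (l ++ [w]) := by
  induction h with
  | single => exact .cons hvw (.single w)
  | cons huv _ ih => exact .cons huv (ih hvw)

theorem mono_of_mem (h : IsWalk r u v l) (hr : ∀ a ∈ l, ∀ b ∈ l, r a b → r' a b) :
    IsWalk r' u v l := by
  induction h with
  | single u => exact .single u
  | cons huv hw ih =>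
    refine .cons (hr _ List.mem_cons_self _ (List.mem_cons_of_mem _ hw.head_mem) huv)
      (ih fun a ha b hb => hr a (List.mem_cons_of_mem _ ha) b (List.mem_cons_of_mem _ hb))

theorem reflTransGen_of_mem (h : IsWalk r u v l) (hw : w ∈ l) : ReflTransGen r w v := by
  induction h generalizing w with
  | single => rw [List.mem_singleton.mp hw]
  | cons huv hv ih =>
    rcases List.mem_cons.mp hw with rfl | hw
    · exact (ih hv.head_mem).head huv
    · exact ih hw

theorem exists_suffix_of_mem (h : IsWalk r u v l) (hw : w ∈ l) :
    ∃ l', l' <:+ l ∧ IsWalk r w v l' := by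
  induction h with
  | single u =>
    obtain rfl := List.mem_singleton.mp hw
    exact ⟨[w], List.suffix_refl _, .single w⟩
  | cons huv hv ih =>
    rcases List.mem_cons.mp hw with rfl | hw
    · exact ⟨_, List.suffix_refl _, .cons huv hv⟩
    · obtain ⟨l', hl', hw'⟩ := ih hw
      exact ⟨l', hl'.trans (List.suffix_cons _ _), hw'⟩

theorem length_lt_of_isSuffix {l' : List V} (h : IsWalk r u v l) (h' : IsWalk r w v l')
    (hs : l' <:+ l) (hwu : w ≠ u) : l'.length < l.length := by
  refine lt_of_le_of_ne hs.length_le fun hlen => hwu ?_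
  obtain ⟨t, rfl⟩ := h.exists_eq_cons
  obtain ⟨t', rfl⟩ := h'.exists_eq_cons
  exact (List.cons.inj (hs.eq_of_length hlen)).1

theorem exists_nodup (h : IsWalk r u v l) :
    ∃ l', l'.Nodup ∧ l'.length ≤ l.length ∧ IsWalk r u v l' := by
  induction h with
  | single u => exact ⟨[u], List.nodup_singleton u, le_rfl, .single u⟩
  | @cons u _ _ _ huv _ ih =>
    obtain ⟨l', hnd, hlen, hw⟩ := ih
    by_cases hu : u ∈ l'
    · obtain ⟨l'', hsuf, hw'⟩ := hw.exists_suffix_of_mem hu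
      exact ⟨l'', hnd.sublist hsuf.sublist, by grind [hsuf.length_le], hw'⟩
    · exact ⟨u :: l', List.nodup_cons.mpr ⟨hu, hnd⟩, by simpa using hlen, .cons huv hw⟩

theorem forall_mem_of_stepIn {A : V → V → Prop} {S : Set V} (h : IsWalk (StepIn A S) u v l)
    (hv : v ∈ S) : ∀ w ∈ l, w ∈ S := by
  induction h with
  | single => simpa using hv
  | cons huv _ ih => exact List.forall_mem_cons.mpr ⟨huv.1, ih hv⟩

theorem reachIn_of_mem {A : V → V → Prop} {S : Set V} (h : IsWalk A u v l)
    (hS : ∀ a ∈ l, a ∈ S) (hw : w ∈ l) : ReachIn A S w v :=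
  ⟨hS w hw,
    (h.mono_of_mem fun a ha b hb hab => ⟨hS a ha, hS b hb, hab⟩).reflTransGen_of_mem hw⟩

end IsWalk

theorem StepsLe.exists_isWalk {n : ℕ} (h : StepsLe r n u v) :
    ∃ l, IsWalk r u v l ∧ l.length ≤ n + 1 := by
  induction n generalizing u with
  | zero => exact ⟨[u], (show u = v from h) ▸ .single u, le_rfl⟩
  | succ n ih =>
    rcases h with rfl | ⟨w, huw, hw⟩
    · exact ⟨[u], .single u, by simp⟩
    · obtain ⟨l, hl, hlen⟩ := ih hw
      exact ⟨u :: l, .cons huw hl, by simpa using hlen⟩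

structure IsFork (r : V → V → Prop) (u v w : V) (l m : List V) : Prop where
  left : IsWalk r u v l
  right : IsWalk r u w m
  nodup_left : l.Nodup
  nodup_right : m.Nodup
  eq_of_mem : ∀ a ∈ l, a ∈ m → a = u

theorem IsWalk.exists_isFork {m : List V} {w' : V} (hl : IsWalk r u v l)
    (hm : IsWalk r u w' m) :
    ∃ u' l' m', IsFork r u' v w' l' m' ∧ l'.length + m'.length ≤ l.length + m.length := by
  induction hn : l.length + m.length using Nat.strong_induction_on generalizing u l m with
  | _ n ih =>
  obtain ⟨l₀, hndl, hlenl, hl₀⟩ := hl.exists_nodup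
  obtain ⟨m₀, hndm, hlenm, hm₀⟩ := hm.exists_nodup
  by_cases hdisj : ∀ a ∈ l₀, a ∈ m₀ → a = u
  · exact ⟨u, l₀, m₀, ⟨hl₀, hm₀, hndl, hndm, hdisj⟩, by omega⟩
  push Not at hdisj
  obtain ⟨a, hal, ham, hau⟩ := hdisj
  obtain ⟨l₁, hsl, hl₁⟩ := hl₀.exists_suffix_of_mem hal
  obtain ⟨m₁, hsm, hm₁⟩ := hm₀.exists_suffix_of_mem ham
  have hltl := hl₀.length_lt_of_isSuffix hl₁ hsl hau
  have hltm := hm₀.length_lt_of_isSuffix hm₁ hsm hau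
  obtain ⟨u', l', m', hfork, hlen⟩ := ih _ (by omega) hl₁ hm₁ rfl
  exact ⟨u', l', m', hfork, by omega⟩

end Walks

theorem ReachIn.tail {A : V → V → Prop} {S : Set V} {u v w : V} (h : ReachIn A S u v)
    (hvw : StepIn A S v w) : ReachIn A S u w :=
  ⟨h.1, h.2.tail hvw⟩

theorem exists_isFork_of_not_cyclePart {A : V → V → Prop} {i j k : V} {x : ℕ}
    (hj : j ≠ i) (hk : k ≠ i) (h : ¬ CyclePart A {j} {k} i x) :
    ∃ u l l', IsFork A u j k l l' ∧ i ∉ l ∧ i ∉ l' ∧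
      l.length + l'.length ≤ x + 2 := by
  unfold CyclePart at h
  push Not at h
  obtain ⟨a, b, rfl, u, ⟨_, rfl, -, hreach⟩, _, rfl, -, hreach'⟩ := h
  obtain ⟨l₀, hl₀, hlen₀⟩ := hreach.exists_isWalk
  obtain ⟨l₀', hl₀', hlen₀'⟩ := hreach'.exists_isWalk
  obtain ⟨u', l, l', hf, hlen⟩ := hl₀.exists_isFork hl₀'
  have hl := hf.left.forall_mem_of_stepIn hj
  have hl' := hf.right.forall_mem_of_stepIn hk
  refine ⟨u', l, l', { hf with left := ?_, right := ?_ }, fun h => hl i h rfl,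
    fun h => hl' i h rfl, by omega⟩
  · exact hf.left.mono_of_mem fun _ _ _ _ h => h.2.2
  · exact hf.right.mono_of_mem fun _ _ _ _ h => h.2.2

instance {A : V → V → Prop} {W : Set V} : Std.Symm (UStep A W) :=
  ⟨fun _ _ h => ⟨h.2.1, h.1, h.2.2.1.symm, h.2.2.2.symm⟩⟩

theorem uConnected_of_isChain {A : V → V → Prop} {l : List V} (hne : l ≠ []) (hnd : l.Nodup)
    (hl : l.IsChain (SymmGen A)) : UConnected A {w | w ∈ l} := by
  have hstep : l.IsChain (UStep A {w | w ∈ l}) :=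
    (hl.and (List.Pairwise.isChain hnd)).imp_of_mem_imp
      fun _ _ ha hb ⟨hab, hne⟩ => ⟨ha, hb, hne, hab⟩
  obtain ⟨a, ha⟩ := List.exists_mem_of_ne_nil l hne
  exact ⟨⟨a, ha⟩, fun _ hu _ hv => hstep.reflTransGen_of_mem hu hv⟩

theorem biconnected_of_cycleChain {A : V → V → Prop} {C : List V} (hnd : C.Nodup)
    (h3 : 3 ≤ C.length) (hC : Cycle.Chain (SymmGen A) (C : Cycle V)) :
    Biconnected A {w | w ∈ C} := by
  refine ⟨by rwa [List.ncard_setOf_mem_of_nodup hnd],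
    uConnected_of_isChain (List.ne_nil_of_length_pos (by omega)) hnd hC.isChain,
    fun v hv => ?_⟩
  -- rotating `v` to the front of the cycle, what remains after deleting `v` is a path
  obtain ⟨s, t, rfl⟩ := List.append_of_mem hv
  have hrot : s ++ v :: t ~r v :: (t ++ s) := List.isRotated_append
  rw [Cycle.coe_eq_coe.mpr hrot, Cycle.chain_coe_cons] at hC
  obtain ⟨hvts, hnd'⟩ := List.nodup_cons.mp (hrot.nodup_iff.mp hnd)
  have hset : {w | w ∈ s ++ v :: t} \ {v} = {w | w ∈ t ++ s} := by
    ext w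
    simp only [Set.mem_sdiff, Set.mem_ofPred_eq, Set.mem_singleton_iff, List.mem_append,
      List.mem_cons]
    grind
  rw [hset]
  refine uConnected_of_isChain (List.ne_nil_of_length_pos ?_) hnd' hC.tail.left_of_append
  simp only [List.length_append, List.length_cons] at h3 ⊢
  omega

theorem exists_sink_of_reachIn_or {A : V → V → Prop} {W : Set V} {i k : V} (hiW : i ∈ W)
    (hkW : k ∈ W) (hik : SymmGen A i k) (h : ∀ w ∈ W, ReachIn A W w i ∨ ReachIn A W w k) :
    ∃ s ∈ W, ∀ w ∈ W, ReachIn A W w s := by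
  rcases hik with hik | hki
  · exact ⟨k, hkW, fun w hw => (h w hw).elim (·.tail ⟨hiW, hkW, hik⟩) id⟩
  · exact ⟨i, hiW, fun w hw => (h w hw).elim id (·.tail ⟨hkW, hiW, hki⟩)⟩

/-- For a fork `l`, `l'` from `u` to `j` and `k`, the cycle `i — k ⇝ u ⇝ j — i`. -/
def forkCycle (i : V) (l l' : List V) : List V :=
  i :: (l'.reverse ++ l.tail)

namespace IsFork

variable {A : V → V → Prop} {u j k i w : V} {l l' : List V}

theorem mem_forkCycle (hf : IsFork A u j k l l') :
    w ∈ forkCycle i l l' ↔ w = i ∨ w ∈ l ∨ w ∈ l' := by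
  rw [forkCycle]
  obtain ⟨t, rfl⟩ := hf.left.exists_eq_cons
  have := hf.right.head_mem
  simp only [List.mem_cons, List.mem_append, List.mem_reverse, List.tail_cons]
  grind

theorem length_forkCycle (hf : IsFork A u j k l l') :
    (forkCycle i l l').length = l.length + l'.length := by
  rw [forkCycle]
  obtain ⟨t, rfl⟩ := hf.left.exists_eq_cons
  simp only [List.length_cons, List.length_append, List.length_reverse, List.tail_cons]
  omega

theorem nodup_forkCycle (hf : IsFork A u j k l l') (hil : i ∉ l)
    (hil' : i ∉ l') : (forkCycle i l l').Nodup := by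
  rw [forkCycle]
  have hndl := hf.nodup_left
  obtain ⟨t, rfl⟩ := hf.left.exists_eq_cons
  obtain ⟨hut, hndt⟩ := List.nodup_cons.mp hndl
  refine List.nodup_cons.mpr ⟨?_, List.nodup_append.mpr
    ⟨List.nodup_reverse.mpr hf.nodup_right, hndt, ?_⟩⟩
  · simp only [List.mem_append, List.mem_reverse, not_or]
    exact ⟨hil', fun h => hil (List.mem_cons_of_mem _ h)⟩
  · rintro a ha _ hb rfl
    rw [List.mem_reverse] at ha
    exact hut (hf.eq_of_mem a (List.mem_cons_of_mem _ hb) ha ▸ hb)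

theorem cycleChain_forkCycle (hf : IsFork A u j k l l') (hji : A j i)
    (hik : SymmGen A i k) :
    Cycle.Chain (SymmGen A) (forkCycle i l l' : Cycle V) := by
  rw [forkCycle]
  have hl := (hf.left.mono_of_mem fun _ _ _ _ => SymmGen.of_rel).snoc (SymmGen.of_rel hji)
  have hl' := (hf.right.mono_of_mem fun _ _ _ _ => SymmGen.of_rel).snoc hik.symm
  obtain ⟨t, rfl⟩ := hf.left.exists_eq_cons
  obtain ⟨t', rfl⟩ := hf.right.exists_eq_cons
  have h₁ : (i :: t'.reverse ++ [u]).IsChain (SymmGen A) := by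
    simpa using List.isChain_reverse.mpr (hl'.isChain.imp fun _ _ h => h.symm)
  have h₂ : ([u] ++ (t ++ [i])).IsChain (SymmGen A) := hl.isChain
  simpa using h₁.append_overlap h₂ (List.cons_ne_nil _ _)

theorem directedSubBlock_forkCycle (hf : IsFork A u j k l l') (hji : A j i)
    (hik : SymmGen A i k) (hil : i ∉ l) (hil' : i ∉ l') (h3 : 3 ≤ l.length + l'.length) :
    DirectedSubBlock A {w | w ∈ forkCycle i l l'} := by
  have hl : ∀ w ∈ l, w ∈ {w | w ∈ forkCycle i l l'} := fun _ hw =>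
    hf.mem_forkCycle.mpr (.inr (.inl hw))
  have hl' : ∀ w ∈ l', w ∈ {w | w ∈ forkCycle i l l'} := fun _ hw =>
    hf.mem_forkCycle.mpr (.inr (.inr hw))
  have hiC : i ∈ {w | w ∈ forkCycle i l l'} := List.mem_cons_self
  refine ⟨exists_sink_of_reachIn_or hiC (hl' k hf.right.last_mem) hik fun w hw => ?_,
    biconnected_of_cycleChain (hf.nodup_forkCycle hil hil')
      (hf.length_forkCycle.symm ▸ h3)
      (hf.cycleChain_forkCycle hji hik)⟩
  rcases hf.mem_forkCycle.mp hw with rfl | hw | hw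
  · exact .inl ⟨hiC, .refl⟩
  · exact .inl ((hf.left.reachIn_of_mem hl hw).tail ⟨hl j hf.left.last_mem, hiC, hji⟩)
  · exact .inr (hf.right.reachIn_of_mem hl' hw)

end IsFork

theorem stmt17_general (A : V → V → Prop)
    (i m j : V) (him : i ≠ m) (hpair : A i m ∨ A m i)
    (hj : j ∉ ({i, m} : Set V)) (hji : A j i) (x : ℕ)
    (hncp : ¬ CyclePart A {j} {m} i x) :
    ∃ U : Set V, ({i, j, m} : Set V) ⊆ U ∧ U.ncard ≤ x + 2 ∧
      DirectedSubBlock A U := by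
  simp only [Set.mem_insert_iff, Set.mem_singleton_iff, not_or] at hj
  obtain ⟨u, l, l', hf, hil, hil', hlen⟩ := exists_isFork_of_not_cyclePart hj.1 him.symm hncp
  have hsub : ({i, j, m} : Set V) ⊆ {w | w ∈ forkCycle i l l'} := by
    rintro w (rfl | rfl | rfl) <;>
      simp [hf.mem_forkCycle, hf.left.last_mem, hf.right.last_mem]
  have hcard := (forkCycle i l l').ncard_setOf_mem_le_length
  have hlength : (forkCycle i l l').length = l.length + l'.length := hf.length_forkCycle
  have hijm : ({i, j, m} : Set V).ncard = 3 :=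
    Set.ncard_eq_three.mpr ⟨i, j, m, Ne.symm hj.1, him, hj.2, rfl⟩
  have hle := Set.ncard_le_ncard hsub (List.finite_toSet _)
  exact ⟨_, hsub, by omega, hf.directedSubBlock_forkCycle hji hpair hil hil' (by omega)⟩

/-- sub-claim in the proof of Theorem B.2. -/
theorem stmt17 [Fintype V] (A : V → V → Prop) (hirr : ∀ v : V, ¬ A v v)
    (i m j : V) (him : i ≠ m) (hpair : A i m ∨ A m i)
    (hj : j ∉ ({i, m} : Set V)) (hji : A j i) (x : ℕ)
    (hncp : ¬ CyclePart A {j} {m} i x) :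
    ∃ U : Set V, ({i, j, m} : Set V) ⊆ U ∧ U.ncard ≤ x + 2 ∧
      DirectedSubBlock A U :=
  stmt17_general A i m j him hpair hj hji x hncp
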